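/- arXiv:2102.10107 — 6 statements merged into one kernel-verified Lean document; each statement's English description precedes it below -/
import Mathlib

section
/- Let c, λ, μ, q > 0 with (q+λ)² - cλμ < 0, and let γ₁ > 0 > γ₂ be the roots of c s² + s(cμ-λ-q) - qμ = 0. Then γ₂²(μ+γ₂) > γ₁²(μ+γ₁), so that b* := (1/(γ₁-γ₂)) · log(γ₂²(μ+γ₂)/(γ₁²(μ+γ₁))) is well-defined and strictly positive. -/
theorem stmt4 (c lam mu q γ₁ γ₂ : ℝ) (hc : 0 < c) (hlam : 0 < lam) (hmu : 0 < mu) (hq : 0 < q)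
    (hcond : (q + lam) ^ 2 - c * lam * mu < 0)
    (hγ₂ : γ₂ < 0) (hγ₁ : 0 < γ₁)
    (hroot1 : c * γ₁ ^ 2 + γ₁ * (c * mu - lam - q) - q * mu = 0)
    (hroot2 : c * γ₂ ^ 2 + γ₂ * (c * mu - lam - q) - q * mu = 0) :
    γ₁ ^ 2 * (mu + γ₁) < γ₂ ^ 2 * (mu + γ₂) ∧
      0 < (1 / (γ₁ - γ₂)) * Real.log ((γ₂ ^ 2 * (mu + γ₂)) / (γ₁ ^ 2 * (mu + γ₁))) := by
  have hdiff : 0 < γ₁ - γ₂ := by linarith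
  have hne : γ₁ - γ₂ ≠ 0 := ne_of_gt hdiff
  have hsum : c * (γ₁ + γ₂) = lam + q - c * mu := by
    have h : (γ₁ - γ₂) * (c * (γ₁ + γ₂) - (lam + q - c * mu)) = 0 := by
      linear_combination hroot1 - hroot2
    rcases mul_eq_zero.mp h with h' | h'
    · exact absurd h' hne
    · linarith
  have hprod : c * (γ₁ * γ₂) = -(q * mu) := by
    have h : (γ₁ - γ₂) * (c * (γ₁ * γ₂) + q * mu) = 0 := by
      linear_combination γ₂ * hroot1 - γ₁ * hroot2
    rcases mul_eq_zero.mp h with h' | h'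
    · exact absurd h' hne
    · linarith
  have hfac : c * (mu + γ₁) * (mu + γ₂) = lam * mu := by
    linear_combination mu * hsum + hprod
  have hmu1 : 0 < mu + γ₁ := by linarith
  have hmu2 : 0 < mu + γ₂ := by
    by_contra h
    push_neg at h
    nlinarith [mul_pos hlam hmu, mul_pos hc hmu1]
  have key : c ^ 2 * (γ₂ ^ 2 * (mu + γ₂) - γ₁ ^ 2 * (mu + γ₁)) =
      (γ₁ - γ₂) * (c * lam * mu - (q + lam) ^ 2) := by
    linear_combination (-(γ₁ - γ₂)) * (c * mu + c * (γ₁ + γ₂) + (lam + q - c * mu)) * hsum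
      + (γ₁ - γ₂) * c * hprod
  have hlt : γ₁ ^ 2 * (mu + γ₁) < γ₂ ^ 2 * (mu + γ₂) := by
    nlinarith [mul_pos hdiff (by linarith : (0:ℝ) < c * lam * mu - (q + lam) ^ 2),
      sq_nonneg c, mul_pos hc hc]
  refine ⟨hlt, mul_pos (by positivity) ?_⟩
  have hpos1 : 0 < γ₁ ^ 2 * (mu + γ₁) := by positivity
  exact Real.log_pos ((one_lt_div hpos1).mpr hlt)
end

section
/- For c, λ, μ, q > 0 with (q+λ)² - cλμ < 0 and W_q(x) = ((μ+γ₁)e^{γ₁x} - (μ+γ₂)e^{γ₂x})/(c(γ₁-γ₂)), the derivative W_q'(x) attains its unique global minimum on [0,∞) at b* = (1/(γ₁-γ₂)) log(γ₂²(μ+γ₂)/(γ₁²(μ+γ₁))). -/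
/-!
The derivative `W' x = p e^{γ₁x} + r e^{γ₂x}` has `p, r > 0` because `μ + γ₂ > 0` (read off from
the quadratic at `γ₂`). A positive combination of exponentials lies strictly above its tangent
lines, so it is strictly minimal wherever its derivative vanishes, and `W''(b*) = 0` is exactly
`e^{(γ₁-γ₂)b*} = γ₂²(μ+γ₂)/(γ₁²(μ+γ₁))`. Via Vieta, `b* ≥ 0` follows from
`c² ((γ₁+γ₂)(μ + γ₁+γ₂) - γ₁γ₂) = (q+λ)² - cλμ < 0`.
-/

open Real

section ExpCombination

variable {p r α β : ℝ}

theorem hasDerivAt_exp_combination (x : ℝ) :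
    HasDerivAt (fun x => p * exp (α * x) + r * exp (β * x))
      (p * α * exp (α * x) + r * β * exp (β * x)) x := by
  have hexp (γ : ℝ) : HasDerivAt (fun x => exp (γ * x)) (exp (γ * x) * γ) x :=
    ((hasDerivAt_id x).const_mul γ).exp.congr_deriv (by simp)
  exact ((hexp α).const_mul p).add ((hexp β).const_mul r) |>.congr_deriv (by ring)

theorem exp_combination_deriv_eq_zero (hpα : 0 < p * α) (hrβ : r * β < 0) (hαβ : α ≠ β) :
    let x₀ := 1 / (α - β) * log (-(r * β) / (p * α))
    p * α * exp (α * x₀) + r * β * exp (β * x₀) = 0 := by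
  intro x₀
  have hsub : α - β ≠ 0 := sub_ne_zero.mpr hαβ
  have hpα' : p * α ≠ 0 := hpα.ne'
  have hx₀ : exp ((α - β) * x₀) = -(r * β) / (p * α) := by
    rw [show (α - β) * x₀ = log (-(r * β) / (p * α)) by simp only [x₀]; field_simp]
    exact exp_log (div_pos (neg_pos.mpr hrβ) hpα)
  have hsplit : exp (α * x₀) = exp ((α - β) * x₀) * exp (β * x₀) := by
    rw [← exp_add]; ring_nf
  rw [hsplit, hx₀, ← mul_assoc, mul_div_cancel₀ _ hpα']
  ring

theorem exp_combination_lt_of_deriv_eq_zero (hp : 0 < p) (hr : 0 ≤ r) (hα : α ≠ 0) {x₀ x : ℝ}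
    (hcrit : p * α * exp (α * x₀) + r * β * exp (β * x₀) = 0) (hx : x ≠ x₀) :
    p * exp (α * x₀) + r * exp (β * x₀) < p * exp (α * x) + r * exp (β * x) := by
  have hshift (γ : ℝ) : exp (γ * x) = exp (γ * x₀) * exp (γ * (x - x₀)) := by
    rw [← exp_add]; ring_nf
  rw [hshift α, hshift β]
  have hαabove := mul_lt_mul_of_pos_left
    (add_one_lt_exp (mul_ne_zero hα (sub_ne_zero.mpr hx))) (mul_pos hp (exp_pos (α * x₀)))
  have hβabove := mul_le_mul_of_nonneg_left
    (add_one_le_exp (β * (x - x₀))) (mul_nonneg hr (exp_pos (β * x₀)).le)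
  have htangent : p * exp (α * x₀) * (α * (x - x₀) + 1) + r * exp (β * x₀) * (β * (x - x₀) + 1)
      = p * exp (α * x₀) + r * exp (β * x₀) := by
    linear_combination (x - x₀) * hcrit
  linarith

end ExpCombination

section QuadraticRoots

variable {c lam mu q γ₁ γ₂ : ℝ}

theorem mu_add_pos_of_neg_root (hc : 0 < c) (hlam : 0 < lam) (hq : 0 < q) (hγ₂ : γ₂ < 0)
    (hroot : c * γ₂ ^ 2 + γ₂ * (c * mu - lam - q) - q * mu = 0) : 0 < mu + γ₂ := by
  have hfac : (mu + γ₂) * (c * γ₂ - q) = lam * γ₂ := by linear_combination hroot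
  have hneg : c * γ₂ - q < 0 := by linarith [mul_neg_of_pos_of_neg hc hγ₂]
  exact pos_of_mul_neg_left (hfac ▸ mul_neg_of_pos_of_neg hlam hγ₂) hneg.le

theorem sq_mul_add_lt_of_roots (hcond : (q + lam) ^ 2 - c * lam * mu < 0)
    (hγ : γ₂ < γ₁)
    (hroot1 : c * γ₁ ^ 2 + γ₁ * (c * mu - lam - q) - q * mu = 0)
    (hroot2 : c * γ₂ ^ 2 + γ₂ * (c * mu - lam - q) - q * mu = 0) :
    γ₁ ^ 2 * (mu + γ₁) < γ₂ ^ 2 * (mu + γ₂) := by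
  have hsub : γ₁ - γ₂ ≠ 0 := sub_ne_zero.mpr hγ.ne'
  have hsum : c * (γ₁ + γ₂) = lam + q - c * mu :=
    mul_left_cancel₀ hsub (by linear_combination hroot1 - hroot2)
  have hprod : c * (γ₁ * γ₂) = -(q * mu) := by linear_combination γ₁ * hsum - hroot1
  have hdisc : c ^ 2 * (mu * (γ₁ + γ₂) + (γ₁ + γ₂) ^ 2 - γ₁ * γ₂) = (q + lam) ^ 2 - c * lam * mu := by
    linear_combination (c * mu + c * (γ₁ + γ₂) + (lam + q - c * mu)) * hsum - c * hprod
  have hneg : mu * (γ₁ + γ₂) + (γ₁ + γ₂) ^ 2 - γ₁ * γ₂ < 0 :=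
    neg_of_mul_neg_right (hdisc ▸ hcond) (sq_nonneg c)
  nlinarith [mul_pos (sub_pos.mpr hγ) (neg_pos.mpr hneg)]

end QuadraticRoots

theorem stmt5_general (c lam mu q γ₁ γ₂ : ℝ) (hc : 0 < c) (hlam : 0 < lam) (hq : 0 < q)
    (hcond : (q + lam) ^ 2 - c * lam * mu < 0)
    (hγ₂ : γ₂ < 0) (hγ₁ : 0 < γ₁)
    (hroot1 : c * γ₁ ^ 2 + γ₁ * (c * mu - lam - q) - q * mu = 0)
    (hroot2 : c * γ₂ ^ 2 + γ₂ * (c * mu - lam - q) - q * mu = 0)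
    (W : ℝ → ℝ)
    (hW : W = fun x => ((mu + γ₁) * Real.exp (γ₁ * x) - (mu + γ₂) * Real.exp (γ₂ * x)) / (c * (γ₁ - γ₂)))
    (bstar : ℝ)
    (hb : bstar = (1 / (γ₁ - γ₂)) * Real.log ((γ₂ ^ 2 * (mu + γ₂)) / (γ₁ ^ 2 * (mu + γ₁)))) :
    bstar ∈ Set.Ici (0 : ℝ) ∧
      ∀ x ∈ Set.Ici (0 : ℝ), x ≠ bstar → deriv W bstar < deriv W x := by
  have hγ : γ₂ < γ₁ := hγ₂.trans hγ₁
  have hμγ₂ : 0 < mu + γ₂ := mu_add_pos_of_neg_root hc hlam hq hγ₂ hroot2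
  have hμγ₁ : 0 < mu + γ₁ := by linarith
  have hK : 0 < c * (γ₁ - γ₂) := mul_pos hc (sub_pos.mpr hγ)
  set p := (mu + γ₁) / (c * (γ₁ - γ₂)) * γ₁
  set r := -((mu + γ₂) / (c * (γ₁ - γ₂))) * γ₂
  have hp : 0 < p := mul_pos (div_pos hμγ₁ hK) hγ₁
  have hr : 0 < r := mul_pos_of_neg_of_neg (neg_neg_of_pos (div_pos hμγ₂ hK)) hγ₂
  have hderiv : deriv W = fun x => p * exp (γ₁ * x) + r * exp (γ₂ * x) := by
    funext x
    refine HasDerivAt.deriv (hasDerivAt_exp_combination x |>.congr_of_eventuallyEq ?_)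
    exact Filter.Eventually.of_forall fun y => by rw [hW]; ring
  have hbstar : bstar = 1 / (γ₁ - γ₂) * log (-(r * γ₂) / (p * γ₁)) := by
    rw [hb]
    congr 2
    have hsub : γ₁ - γ₂ ≠ 0 := (sub_pos.mpr hγ).ne'
    simp only [p, r]
    field_simp
  refine ⟨?_, fun x _ hx => ?_⟩
  · rw [hb]
    have hratio : 1 ≤ γ₂ ^ 2 * (mu + γ₂) / (γ₁ ^ 2 * (mu + γ₁)) :=
      (one_le_div (mul_pos (pow_pos hγ₁ 2) hμγ₁)).mpr (sq_mul_add_lt_of_roots hcond hγ hroot1 hroot2).le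
    exact mul_nonneg (one_div_nonneg.mpr (sub_nonneg.mpr hγ.le)) (log_nonneg hratio)
  · rw [hderiv]
    refine exp_combination_lt_of_deriv_eq_zero hp hr.le hγ₁.ne' ?_ hx
    rw [hbstar]
    exact exp_combination_deriv_eq_zero (mul_pos hp hγ₁) (mul_neg_of_pos_of_neg hr hγ₂) hγ.ne'

theorem stmt5 (c lam mu q γ₁ γ₂ : ℝ) (hc : 0 < c) (hlam : 0 < lam) (hmu : 0 < mu) (hq : 0 < q)
    (hcond : (q + lam) ^ 2 - c * lam * mu < 0)
    (hγ₂ : γ₂ < 0) (hγ₁ : 0 < γ₁)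
    (hroot1 : c * γ₁ ^ 2 + γ₁ * (c * mu - lam - q) - q * mu = 0)
    (hroot2 : c * γ₂ ^ 2 + γ₂ * (c * mu - lam - q) - q * mu = 0)
    (W : ℝ → ℝ)
    (hW : W = fun x => ((mu + γ₁) * Real.exp (γ₁ * x) - (mu + γ₂) * Real.exp (γ₂ * x)) / (c * (γ₁ - γ₂)))
    (bstar : ℝ)
    (hb : bstar = (1 / (γ₁ - γ₂)) * Real.log ((γ₂ ^ 2 * (mu + γ₂)) / (γ₁ ^ 2 * (mu + γ₁)))) :
    bstar ∈ Set.Ici (0 : ℝ) ∧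
      ∀ x ∈ Set.Ici (0 : ℝ), x ≠ bstar → deriv W bstar < deriv W x :=
  stmt5_general c lam mu q γ₁ γ₂ hc hlam hq hcond hγ₂ hγ₁ hroot1 hroot2 W hW bstar hb
end

section
/- Let λ, q, d > 0 and set f = λd/(λ+q), and assume f > 1. For k ≥ 1 define δ(k) = λ + q - λk(1 - e^{-d/k}). Then δ is strictly decreasing in k on [1, ∞), and δ(k) < 0 if and only if k > k_c where k_c = ((q+λ)/λ)·f/(f + L₀(-f e^{-f})), with L₀ the principal Lambert-W branch. -/
/-!
Write `g k = k (1 - e^{-d/k})`, so that `δ = λ + q - λ g`. Substituting `y = -d/k` gives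
`g k = d (e^y - 1) / y`, a secant slope of the strictly convex `exp` through `0`, hence strictly
increasing in `k > 0`. With `w = L₀(-f e^{-f})` one has `e^{-(f+w)} = -w/f`, so
`g (d / (f + w)) = d / f = (λ + q) / λ`: `k_c = d / (f + w)` is the zero of `δ`, and it is positive
because `w ≥ -1 > -f`.
-/

open Real Set

lemma strictMonoOn_exp_sub_one_div : StrictMonoOn (fun y => (exp y - 1) / y) {0}ᶜ := by
  intro x hx y hy hxy
  simpa using strictConvexOn_exp.secant_strict_mono (a := 0) (mem_univ 0) (mem_univ x)
    (mem_univ y) hx hy hxy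

lemma strictMonoOn_mul_one_sub_exp_neg_div {d : ℝ} (hd : 0 < d) :
    StrictMonoOn (fun k => k * (1 - exp (-d / k))) (Ioi 0) := by
  intro a (ha : 0 < a) b (hb : 0 < b) hab
  have hy : -d / a < -d / b := by
    simpa only [neg_div, neg_lt_neg_iff] using div_lt_div_of_pos_left hd ha hab
  have key := strictMonoOn_exp_sub_one_div (by simp [hd.ne', ha.ne'] : -d / a ∈ ({0}ᶜ : Set ℝ))
    (by simp [hd.ne', hb.ne'] : -d / b ∈ ({0}ᶜ : Set ℝ)) hy
  have h_eq : ∀ k, 0 < k → k * (1 - exp (-d / k)) = d * ((exp (-d / k) - 1) / (-d / k)) := by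
    intro k hk
    field_simp
    ring
  simp only [h_eq a ha, h_eq b hb]
  exact mul_lt_mul_of_pos_left key hd

lemma exp_neg_add_eq_of_mul_exp_eq {f w : ℝ} (hf : f ≠ 0) (hw : w * exp w = -f * exp (-f)) :
    exp (-(f + w)) = -w / f := by
  rw [eq_div_iff hf, neg_add, exp_add, ← mul_right_inj' (exp_pos w).ne']
  calc exp w * (exp (-f) * exp (-w) * f) = f * exp (-f) * (exp w * exp (-w)) := by ring
    _ = exp w * -w := by rw [← exp_add, add_neg_cancel, exp_zero]; linarith

lemma mul_one_sub_exp_neg_div_eq_of_mul_exp_eq {d f w : ℝ} (hd : d ≠ 0) (hf : f ≠ 0)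
    (hfw : f + w ≠ 0) (hw : w * exp w = -f * exp (-f)) :
    d / (f + w) * (1 - exp (-d / (d / (f + w)))) = d / f := by
  rw [show -d / (d / (f + w)) = -(f + w) by field_simp, exp_neg_add_eq_of_mul_exp_eq hf hw]
  field_simp
  ring

theorem stmt10_general (lam q d : ℝ) (hlam : 0 < lam) (hd : 0 < d)
    (f : ℝ) (hf : f = lam * d / (lam + q)) (hf1 : 1 < f)
    (L0 : ℝ → ℝ)
    (hL0 : ∀ z : ℝ, -(1 / Real.exp 1) ≤ z → -1 ≤ L0 z ∧ L0 z * Real.exp (L0 z) = z)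
    (δ : ℝ → ℝ)
    (hδ : ∀ k, δ k = lam + q - lam * k * (1 - Real.exp (-d / k)))
    (kc : ℝ) (hkc : kc = ((q + lam) / lam) * f / (f + L0 (-f * Real.exp (-f)))) :
    StrictAntiOn δ (Set.Ici 1) ∧ ∀ k ≥ (1:ℝ), (δ k < 0 ↔ kc < k) := by
  set g : ℝ → ℝ := fun k => k * (1 - exp (-d / k))
  have hg := strictMonoOn_mul_one_sub_exp_neg_div hd
  have hbound : -(1 / exp 1) ≤ -f * exp (-f) := by
    rw [one_div, ← exp_neg, neg_mul, neg_le_neg_iff]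
    exact mul_exp_neg_le_exp_neg_one f
  set w := L0 (-f * exp (-f))
  obtain ⟨hw1, hw⟩ : -1 ≤ w ∧ w * exp w = -f * exp (-f) := hL0 _ hbound
  have hfw : 0 < f + w := by linarith
  have hlamq : lam + q ≠ 0 := by
    rintro h
    rw [h, div_zero] at hf
    linarith
  have hkc' : kc = d / (f + w) := by
    rw [hkc, hf]
    field_simp
    ring
  have hkc0 : 0 < kc := hkc' ▸ div_pos hd hfw
  have hgkc : lam * g kc = lam + q := by
    rw [show g kc = d / f from hkc' ▸
      mul_one_sub_exp_neg_div_eq_of_mul_exp_eq hd.ne' (by linarith) hfw.ne' hw, hf]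
    field_simp
  have hδg : ∀ k, δ k = lam * g kc - lam * g k := fun k => by rw [hδ, hgkc, mul_assoc]
  have hIci : Ici (1 : ℝ) ⊆ Ioi 0 := Ici_subset_Ioi.mpr one_pos
  refine ⟨fun a ha b hb hab => ?_, fun k hk => ?_⟩
  · rw [hδg, hδg]
    exact sub_lt_sub_left (mul_lt_mul_of_pos_left (hg (hIci ha) (hIci hb) hab) hlam) _
  · rw [hδg, sub_neg, mul_lt_mul_iff_of_pos_left hlam]
    exact hg.lt_iff_lt hkc0 (hIci hk)

theorem stmt10 (lam q d : ℝ) (hlam : 0 < lam) (hq : 0 < q) (hd : 0 < d)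
    (f : ℝ) (hf : f = lam * d / (lam + q)) (hf1 : 1 < f)
    (L0 : ℝ → ℝ)
    (hL0 : ∀ z : ℝ, -(1 / Real.exp 1) ≤ z → -1 ≤ L0 z ∧ L0 z * Real.exp (L0 z) = z)
    (δ : ℝ → ℝ)
    (hδ : ∀ k, δ k = lam + q - lam * k * (1 - Real.exp (-d / k)))
    (kc : ℝ) (hkc : kc = ((q + lam) / lam) * f / (f + L0 (-f * Real.exp (-f)))) :
    StrictAntiOn δ (Set.Ici 1) ∧ ∀ k ≥ (1:ℝ), (δ k < 0 ↔ kc < k) :=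
  stmt10_general lam q d hlam hd f hf hf1 L0 hL0 δ hδ kc hkc
end

section
/- Fix λ, q, μ, c̃, k > 0 with g := λ/q - μc̃/(kq) < λ/q (equivalently c̃ > 0). Then the equation c̃ = k(aq + (λ/μ)(1 - e^{-μa})) in the unknown a has the unique solution a satisfying μa = -g + L₀((λ/q)·e^g), and this a is strictly positive whenever g < λ/q. -/
/-!
Multiplying the equation by `μ/(kq)` and substituting `w = μ a + g` turns it into `w e^w = (λ/q) e^g`,
which `w = L₀((λ/q) e^g)` solves. Uniqueness and positivity need no Lambert-W theory: the
right-hand side `a ↦ k (a q + (λ/μ)(1 - e^{-μa}))` is strictly increasing and vanishes at `a = 0`,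
while `c̃ > 0`.
-/

open Real

theorem strictMono_mul_add_mul_one_sub_exp {q lam mu : ℝ} (hq : 0 < q) (hlam : 0 ≤ lam)
    (hmu : 0 < mu) : StrictMono fun a => a * q + lam / mu * (1 - exp (-mu * a)) := by
  refine (strictMono_mul_right_of_pos hq).add_monotone fun x y hxy => ?_
  simp only [neg_mul]
  gcongr

theorem eq_mul_add_mul_one_sub_exp_of_mul_exp_eq {lam q mu ctil k g w a : ℝ} (hlam : lam ≠ 0)
    (hq : q ≠ 0) (hmu : mu ≠ 0) (hk : k ≠ 0) (hg : g = lam / q - mu * ctil / (k * q))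
    (hw : w * exp w = lam / q * exp g) (ha : mu * a = w - g) :
    ctil = k * (a * q + lam / mu * (1 - exp (-mu * a))) := by
  have hw' : w * exp w * q = lam * exp g := by rw [hw]; field_simp
  have hgq : g * (k * q) = lam * k - mu * ctil := by rw [hg]; field_simp
  have hexp : exp (-mu * a) = w * q / lam := by
    rw [neg_mul, ha, neg_sub, exp_sub, div_eq_div_iff (exp_pos w).ne' hlam]
    linear_combination -hw'
  rw [hexp]
  field_simp
  linear_combination (-k * q) * ha + hgq

theorem stmt13_general (lam q mu ctil k : ℝ)
    (hlam : 0 < lam) (hq : 0 < q) (hmu : 0 < mu) (hctil : 0 < ctil) (hk : 0 < k)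
    (g : ℝ) (hg : g = lam / q - mu * ctil / (k * q))
    (L0 : ℝ → ℝ)
    (hL0 : ∀ z : ℝ, -(1 / Real.exp 1) ≤ z → -1 ≤ L0 z ∧ L0 z * Real.exp (L0 z) = z)
    (a0 : ℝ) (ha0 : a0 = (-g + L0 ((lam / q) * Real.exp g)) / mu) :
    (ctil = k * (a0 * q + (lam / mu) * (1 - Real.exp (-mu * a0)))) ∧
      (∀ a : ℝ, ctil = k * (a * q + (lam / mu) * (1 - Real.exp (-mu * a))) → a = a0) ∧
      0 < a0 := by
  set f : ℝ → ℝ := fun a => a * q + lam / mu * (1 - exp (-mu * a))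
  have hf : StrictMono f := strictMono_mul_add_mul_one_sub_exp hq hlam.le hmu
  have hz : 0 < lam / q * exp g := by positivity
  have hW : L0 (lam / q * exp g) * exp (L0 (lam / q * exp g)) = lam / q * exp g :=
    (hL0 _ (by linarith [one_div_pos.mpr (exp_pos 1)])).2
  have hsol : ctil = k * f a0 :=
    eq_mul_add_mul_one_sub_exp_of_mul_exp_eq hlam.ne' hq.ne' hmu.ne' hk.ne' hg hW
      (by rw [ha0]; field_simp; ring)
  refine ⟨hsol, fun a ha => hf.injective (mul_left_cancel₀ hk.ne' (ha.symm.trans hsol)), ?_⟩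
  have hf0 : f 0 = 0 := by simp [f]
  exact hf.lt_iff_lt.mp (by rw [hf0]; exact pos_of_mul_pos_right (hsol ▸ hctil) hk.le)

theorem stmt13 (lam q mu ctil k : ℝ)
    (hlam : 0 < lam) (hq : 0 < q) (hmu : 0 < mu) (hctil : 0 < ctil) (hk : 0 < k)
    (g : ℝ) (hg : g = lam / q - mu * ctil / (k * q)) (hglt : g < lam / q)
    (L0 : ℝ → ℝ)
    (hL0 : ∀ z : ℝ, -(1 / Real.exp 1) ≤ z → -1 ≤ L0 z ∧ L0 z * Real.exp (L0 z) = z)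
    (a0 : ℝ) (ha0 : a0 = (-g + L0 ((lam / q) * Real.exp g)) / mu) :
    (ctil = k * (a0 * q + (lam / mu) * (1 - Real.exp (-mu * a0)))) ∧
      (∀ a : ℝ, ctil = k * (a * q + (lam / mu) * (1 - Real.exp (-mu * a))) → a = a0) ∧
      0 < a0 :=
  stmt13_general lam q mu ctil k hlam hq hmu hctil hk g hg L0 hL0 a0 ha0
end

section
/- In the exponential-claims model, the function C(x) = cW_q(x) - Z_q(x) satisfies C(0) = 0, C'(0) = λ/c, and C is strictly increasing on (0,∞). -/
/-!
`C' = c W_q' - q W_q` is a combination of `e^{γ₁x}` and `e^{γ₂x}` whose coefficients are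
`(μ + γ₁)(cγ₁ - q)` and `(μ + γ₂)(q - cγ₂)`. Writing the Lundberg quadratic as `c(s - γ₁)(s - γ₂)`
and evaluating it at `s = -μ` (value `μλ > 0`) and at `s = q/c` (value `-qλ/c < 0`) shows
`γ₂ > -μ` and `q/c < γ₁`, so both coefficients are positive and `C` is strictly increasing.
At `0` the same combination reduces, by `c(γ₁ + γ₂) = λ + q - cμ`, to `λ/c`.
-/

open Real

theorem add_roots_of_quadratic {K : Type*} [CommRing K] [IsDomain K] {a b d x y : K}
    (hxy : x ≠ y) (hx : a * x ^ 2 + b * x + d = 0) (hy : a * y ^ 2 + b * y + d = 0) :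
    a * (x + y) + b = 0 :=
  (mul_eq_zero.mp (by linear_combination hx - hy : (x - y) * (a * (x + y) + b) = 0)).resolve_left
    (sub_ne_zero.mpr hxy)

theorem quadratic_eq_mul_sub_mul_sub {K : Type*} [CommRing K] [IsDomain K] {a b d x y : K}
    (hxy : x ≠ y) (hx : a * x ^ 2 + b * x + d = 0) (hy : a * y ^ 2 + b * y + d = 0) (s : K) :
    a * s ^ 2 + b * s + d = a * (s - x) * (s - y) := by
  linear_combination (s - x) * add_roots_of_quadratic hxy hx hy + hx

theorem hasDerivAt_mul_sub_one_add_integral {W W' : ℝ → ℝ} (hW : ∀ x, HasDerivAt W (W' x) x)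
    (c q x : ℝ) :
    HasDerivAt (fun x => c * W x - (1 + q * ∫ y in (0 : ℝ)..x, W y)) (c * W' x - q * W x) x := by
  have hWc : Continuous W := continuous_iff_continuousAt.mpr fun x => (hW x).continuousAt
  exact ((hW x).const_mul c).sub
    (((hWc.integral_hasStrictDerivAt 0 x).hasDerivAt.const_mul q).const_add 1)

namespace ExponentialClaims

noncomputable def scale (c mu γ₁ γ₂ x : ℝ) : ℝ :=
  ((mu + γ₁) * exp (γ₁ * x) - (mu + γ₂) * exp (γ₂ * x)) / (c * (γ₁ - γ₂))

noncomputable def scaleDeriv (c mu γ₁ γ₂ x : ℝ) : ℝ :=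
  ((mu + γ₁) * γ₁ * exp (γ₁ * x) - (mu + γ₂) * γ₂ * exp (γ₂ * x)) / (c * (γ₁ - γ₂))

variable {c lam mu q γ₁ γ₂ : ℝ}

theorem hasDerivAt_scale (x : ℝ) : HasDerivAt (scale c mu γ₁ γ₂) (scaleDeriv c mu γ₁ γ₂ x) x := by
  have hexp (γ : ℝ) : HasDerivAt (fun x => exp (γ * x)) (exp (γ * x) * γ) x := by
    simpa using ((hasDerivAt_id x).const_mul γ).exp
  refine ((((hexp γ₁).const_mul (mu + γ₁)).sub ((hexp γ₂).const_mul (mu + γ₂))).div_const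
    (c * (γ₁ - γ₂))).congr_deriv ?_
  unfold scaleDeriv
  ring

theorem scale_zero (hc : c ≠ 0) (hγ : γ₁ ≠ γ₂) : scale c mu γ₁ γ₂ 0 = 1 / c := by
  have : γ₁ - γ₂ ≠ 0 := sub_ne_zero.mpr hγ
  simp only [scale, mul_zero, exp_zero, mul_one]
  field_simp
  ring

theorem mul_scaleDeriv_sub_mul_scale (hc : c ≠ 0) (hγ : γ₁ ≠ γ₂) (x : ℝ) :
    c * scaleDeriv c mu γ₁ γ₂ x - q * scale c mu γ₁ γ₂ x =
      ((mu + γ₁) * (c * γ₁ - q) * exp (γ₁ * x) + (mu + γ₂) * (q - c * γ₂) * exp (γ₂ * x)) /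
        (c * (γ₁ - γ₂)) := by
  have : γ₁ - γ₂ ≠ 0 := sub_ne_zero.mpr hγ
  unfold scale scaleDeriv
  field_simp
  ring

section Roots

variable (hroot1 : c * γ₁ ^ 2 + γ₁ * (c * mu - lam - q) - q * mu = 0)
  (hroot2 : c * γ₂ ^ 2 + γ₂ * (c * mu - lam - q) - q * mu = 0)
include hroot1 hroot2

theorem lundberg_eq_mul_sub_mul_sub (hγ : γ₁ ≠ γ₂) (s : ℝ) :
    c * s ^ 2 + (c * mu - lam - q) * s + -(q * mu) = c * (s - γ₁) * (s - γ₂) :=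
  quadratic_eq_mul_sub_mul_sub hγ (by linear_combination hroot1)
    (by linear_combination hroot2) s

theorem mul_add_roots (hγ : γ₁ ≠ γ₂) : c * (γ₁ + γ₂) = lam + q - c * mu := by
  linear_combination add_roots_of_quadratic (a := c) (b := c * mu - lam - q) (d := -(q * mu)) hγ
    (by linear_combination hroot1) (by linear_combination hroot2)

theorem mu_add_root₂_pos (hc : 0 < c) (hlam : 0 < lam) (hmu : 0 < mu) (hγ₂ : γ₂ < 0)
    (hγ₁ : 0 < γ₁) : 0 < mu + γ₂ := by
  have h := lundberg_eq_mul_sub_mul_sub hroot1 hroot2 (by linarith) (-mu)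
  have : 0 < c * (mu + γ₁) := by positivity
  nlinarith [mul_pos hlam hmu]

theorem lt_mul_root₁ (hc : 0 < c) (hlam : 0 < lam) (hq : 0 < q) (hγ₂ : γ₂ < 0)
    (hγ₁ : 0 < γ₁) : q < c * γ₁ := by
  have h := lundberg_eq_mul_sub_mul_sub hroot1 hroot2 (by linarith) (q / c)
  field_simp at h
  by_contra! hle
  have : 0 ≤ (q - c * γ₁) * (q - c * γ₂) := mul_nonneg (by linarith) (by nlinarith)
  nlinarith [mul_pos hlam hq]

theorem mul_scaleDeriv_sub_mul_scale_pos (hc : 0 < c) (hlam : 0 < lam) (hmu : 0 < mu)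
    (hq : 0 < q) (hγ₂ : γ₂ < 0) (hγ₁ : 0 < γ₁) (x : ℝ) :
    0 < c * scaleDeriv c mu γ₁ γ₂ x - q * scale c mu γ₁ γ₂ x := by
  rw [mul_scaleDeriv_sub_mul_scale hc.ne' (by linarith)]
  have h₁ : 0 < (mu + γ₁) * (c * γ₁ - q) :=
    mul_pos (by linarith) (by linarith [lt_mul_root₁ hroot1 hroot2 hc hlam hq hγ₂ hγ₁])
  have h₂ : 0 < (mu + γ₂) * (q - c * γ₂) :=
    mul_pos (mu_add_root₂_pos hroot1 hroot2 hc hlam hmu hγ₂ hγ₁) (by nlinarith)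
  have : 0 < c * (γ₁ - γ₂) := mul_pos hc (by linarith)
  positivity

end Roots

end ExponentialClaims

open ExponentialClaims in
theorem stmt16 (c lam mu q γ₁ γ₂ : ℝ) (hc : 0 < c) (hlam : 0 < lam) (hmu : 0 < mu) (hq : 0 < q)
    (hγ₂ : γ₂ < 0) (hγ₁ : 0 < γ₁)
    (hroot1 : c * γ₁ ^ 2 + γ₁ * (c * mu - lam - q) - q * mu = 0)
    (hroot2 : c * γ₂ ^ 2 + γ₂ * (c * mu - lam - q) - q * mu = 0)
    (W Z C : ℝ → ℝ)
    (hW : W = fun x => ((mu + γ₁) * Real.exp (γ₁ * x) - (mu + γ₂) * Real.exp (γ₂ * x)) / (c * (γ₁ - γ₂)))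
    (hZ : ∀ x, Z x = 1 + q * ∫ y in (0:ℝ)..x, W y)
    (hC : ∀ x, C x = c * W x - Z x) :
    C 0 = 0 ∧ deriv C 0 = lam / c ∧ StrictMonoOn C (Set.Ioi 0) := by
  obtain rfl : W = scale c mu γ₁ γ₂ := hW
  obtain rfl : C = fun x =>
      c * scale c mu γ₁ γ₂ x - (1 + q * ∫ y in (0:ℝ)..x, scale c mu γ₁ γ₂ y) := funext fun x => by rw [hC, hZ]
  have hγ : γ₁ ≠ γ₂ := by linarith
  have hC' := hasDerivAt_mul_sub_one_add_integral (W := scale c mu γ₁ γ₂) hasDerivAt_scale c q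
  refine ⟨?_, ?_, ?_⟩
  · simp only [intervalIntegral.integral_same, scale_zero hc.ne' hγ]
    field_simp
    ring
  · rw [(hC' 0).deriv, mul_scaleDeriv_sub_mul_scale hc.ne' hγ]
    simp only [mul_zero, exp_zero, mul_one]
    have := mul_add_roots hroot1 hroot2 hγ
    field_simp
    linear_combination (γ₁ - γ₂) * this
  · exact (strictMono_of_hasDerivAt_pos hC'
      (mul_scaleDeriv_sub_mul_scale_pos hroot1 hroot2 hc hlam hmu hq hγ₂ hγ₁)).strictMonoOn _
end

section
/- Let γ₁ > 0 > γ₂ be the roots of cs² + s(cμ-λ-q) - qμ = 0 with c,λ,μ,q > 0 and cμ - (q+λ) > 0. Then the function C''(x), where C(x) = cW_q(x) - Z_q(x) and W_q is the exponential-claims scale function, has a unique positive root at b̄ = (1/(γ₁-γ₂))·log(γ₂²/γ₁²). -/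
/-!
Since `Z' = q W`, the second derivative of `C = c W - Z` is `c W'' - q W'`. For
`W = ((μ + γ₁) e^{γ₁ x} - (μ + γ₂) e^{γ₂ x}) / (c (γ₁ - γ₂))` the quadratic equation satisfied by
each root `γ` turns the coefficient `(μ + γ)(c γ - q) γ` of `e^{γ x}` into `λ γ²`, so
`C'' x = λ (γ₁² e^{γ₁ x} - γ₂² e^{γ₂ x}) / (c (γ₁ - γ₂))`. This vanishes exactly when
`e^{(γ₁ - γ₂) x} = γ₂² / γ₁²`, and the sum of roots `γ₁ + γ₂ = -(c μ - λ - q) / c < 0` gives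
`γ₂² > γ₁²`, so the unique zero is positive.
-/

open Real

lemma add_roots_of_quadratic_s18 {a b d γ₁ γ₂ : ℝ} (hne : γ₁ ≠ γ₂)
    (h₁ : a * γ₁ ^ 2 + γ₁ * b - d = 0) (h₂ : a * γ₂ ^ 2 + γ₂ * b - d = 0) :
    a * (γ₁ + γ₂) + b = 0 := by
  have h : (γ₁ - γ₂) * (a * (γ₁ + γ₂) + b) = 0 := by linear_combination h₁ - h₂
  exact (mul_eq_zero.mp h).resolve_left (sub_ne_zero.mpr hne)

lemma hasDerivAt_expDiff (α β γ₁ γ₂ D x : ℝ) :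
    HasDerivAt (fun x => (α * exp (γ₁ * x) - β * exp (γ₂ * x)) / D)
      ((α * γ₁ * exp (γ₁ * x) - β * γ₂ * exp (γ₂ * x)) / D) x := by
  have h : ∀ γ : ℝ, HasDerivAt (fun x => exp (γ * x)) (exp (γ * x) * γ) x := fun γ => by
    simpa using ((hasDerivAt_id x).const_mul γ).exp
  exact (((h γ₁).const_mul α).sub ((h γ₂).const_mul β)).div_const D |>.congr_deriv (by ring)

lemma deriv_expDiff (α β γ₁ γ₂ D : ℝ) :
    deriv (fun x => (α * exp (γ₁ * x) - β * exp (γ₂ * x)) / D) =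
      fun x => (α * γ₁ * exp (γ₁ * x) - β * γ₂ * exp (γ₂ * x)) / D :=
  funext fun x => (hasDerivAt_expDiff α β γ₁ γ₂ D x).deriv

lemma differentiable_expDiff (α β γ₁ γ₂ D : ℝ) :
    Differentiable ℝ (fun x => (α * exp (γ₁ * x) - β * exp (γ₂ * x)) / D) :=
  fun x => (hasDerivAt_expDiff α β γ₁ γ₂ D x).differentiableAt

lemma deriv_mul_sub_integral {W : ℝ → ℝ} (hW : Differentiable ℝ W) (c q : ℝ) :
    deriv (fun x => c * W x - (1 + q * ∫ y in (0 : ℝ)..x, W y)) =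
      fun x => c * deriv W x - q * W x := by
  funext x
  have hint := (hW.continuous.integral_hasStrictDerivAt 0 x).hasDerivAt
  exact ((hW x).hasDerivAt.const_mul c |>.sub ((hint.const_mul q).const_add 1)).deriv

lemma deriv_deriv_mul_sub_integral {W : ℝ → ℝ} (hW : Differentiable ℝ W)
    (hW' : Differentiable ℝ (deriv W)) (c q x : ℝ) :
    deriv (deriv fun x => c * W x - (1 + q * ∫ y in (0 : ℝ)..x, W y)) x =
      c * deriv (deriv W) x - q * deriv W x := by
  rw [deriv_mul_sub_integral hW]
  exact ((hW' x).hasDerivAt.const_mul c |>.sub ((hW x).hasDerivAt.const_mul q)).deriv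

lemma deriv_deriv_mul_scale_sub_integral {c lam mu q γ₁ γ₂ : ℝ}
    (hroot1 : c * γ₁ ^ 2 + γ₁ * (c * mu - lam - q) - q * mu = 0)
    (hroot2 : c * γ₂ ^ 2 + γ₂ * (c * mu - lam - q) - q * mu = 0) {W : ℝ → ℝ}
    (hW : W = fun x => ((mu + γ₁) * exp (γ₁ * x) - (mu + γ₂) * exp (γ₂ * x)) / (c * (γ₁ - γ₂)))
    (x : ℝ) :
    deriv (deriv fun x => c * W x - (1 + q * ∫ y in (0 : ℝ)..x, W y)) x =
      lam * (γ₁ ^ 2 * exp (γ₁ * x) - γ₂ ^ 2 * exp (γ₂ * x)) / (c * (γ₁ - γ₂)) := by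
  have hW' : Differentiable ℝ (deriv W) := by
    rw [hW, deriv_expDiff]
    exact differentiable_expDiff _ _ _ _ _
  rw [deriv_deriv_mul_sub_integral (hW ▸ differentiable_expDiff _ _ _ _ _) hW', hW, deriv_expDiff,
    deriv_expDiff]
  linear_combination (exp (γ₁ * x) * γ₁ / (c * (γ₁ - γ₂))) * hroot1 -
    (exp (γ₂ * x) * γ₂ / (c * (γ₁ - γ₂))) * hroot2

lemma mul_exp_eq_mul_exp_iff {p r γ₁ γ₂ : ℝ} (hp : 0 < p) (hr : 0 < r) (hγ : γ₁ ≠ γ₂) (x : ℝ) :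
    p * exp (γ₁ * x) = r * exp (γ₂ * x) ↔ x = log (r / p) / (γ₁ - γ₂) := by
  have hγ' : γ₁ - γ₂ ≠ 0 := sub_ne_zero.mpr hγ
  calc p * exp (γ₁ * x) = r * exp (γ₂ * x)
      ↔ exp ((γ₁ - γ₂) * x) = r / p := by
        rw [sub_mul, exp_sub, div_eq_div_iff (exp_pos _).ne' hp.ne']
        constructor <;> intro h <;> linarith
    _ ↔ (γ₁ - γ₂) * x = log (r / p) := by
        rw [← exp_eq_exp (x := (γ₁ - γ₂) * x), exp_log (div_pos hr hp)]
    _ ↔ x = log (r / p) / (γ₁ - γ₂) := by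
        rw [eq_div_iff hγ', mul_comm]

theorem stmt18_general (c lam mu q γ₁ γ₂ : ℝ) (hc : 0 < c) (hlam : 0 < lam)
    (hprof : 0 < c * mu - (q + lam))
    (hγ₂ : γ₂ < 0) (hγ₁ : 0 < γ₁)
    (hroot1 : c * γ₁ ^ 2 + γ₁ * (c * mu - lam - q) - q * mu = 0)
    (hroot2 : c * γ₂ ^ 2 + γ₂ * (c * mu - lam - q) - q * mu = 0)
    (W Z C : ℝ → ℝ)
    (hW : W = fun x => ((mu + γ₁) * Real.exp (γ₁ * x) - (mu + γ₂) * Real.exp (γ₂ * x)) / (c * (γ₁ - γ₂)))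
    (hZ : ∀ x, Z x = 1 + q * ∫ y in (0:ℝ)..x, W y)
    (hC : ∀ x, C x = c * W x - Z x)
    (bbar : ℝ) (hbbar : bbar = (1 / (γ₁ - γ₂)) * Real.log (γ₂ ^ 2 / γ₁ ^ 2)) :
    0 < bbar ∧ deriv (deriv C) bbar = 0 ∧
      ∀ x > (0:ℝ), deriv (deriv C) x = 0 → x = bbar := by
  have hγ : γ₂ < γ₁ := hγ₂.trans hγ₁
  have hsum := add_roots_of_quadratic_s18 hγ.ne' hroot1 hroot2
  have hsq : γ₁ ^ 2 < γ₂ ^ 2 := by nlinarith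
  rw [one_div_mul_eq_div] at hbbar
  have hC' : C = fun x => c * W x - (1 + q * ∫ y in (0 : ℝ)..x, W y) := funext fun x => by
    rw [hC, hZ]
  have hzero : ∀ x, deriv (deriv C) x = 0 ↔ x = bbar := fun x => by
    rw [hC', deriv_deriv_mul_scale_sub_integral hroot1 hroot2 hW, div_eq_zero_iff, mul_eq_zero,
      sub_eq_zero, mul_exp_eq_mul_exp_iff (by positivity) ((pow_pos hγ₁ 2).trans hsq) hγ.ne', ← hbbar]
    have hden : c * (γ₁ - γ₂) ≠ 0 := by nlinarith
    simp [hlam.ne', hden]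
  refine ⟨?_, (hzero bbar).2 rfl, fun x _ hx => (hzero x).1 hx⟩
  rw [hbbar]
  exact div_pos (log_pos ((one_lt_div (by positivity)).mpr hsq)) (sub_pos.mpr hγ)

theorem stmt18 (c lam mu q γ₁ γ₂ : ℝ) (hc : 0 < c) (hlam : 0 < lam) (hmu : 0 < mu) (hq : 0 < q)
    (hprof : 0 < c * mu - (q + lam))
    (hγ₂ : γ₂ < 0) (hγ₁ : 0 < γ₁)
    (hroot1 : c * γ₁ ^ 2 + γ₁ * (c * mu - lam - q) - q * mu = 0)
    (hroot2 : c * γ₂ ^ 2 + γ₂ * (c * mu - lam - q) - q * mu = 0)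
    (W Z C : ℝ → ℝ)
    (hW : W = fun x => ((mu + γ₁) * Real.exp (γ₁ * x) - (mu + γ₂) * Real.exp (γ₂ * x)) / (c * (γ₁ - γ₂)))
    (hZ : ∀ x, Z x = 1 + q * ∫ y in (0:ℝ)..x, W y)
    (hC : ∀ x, C x = c * W x - Z x)
    (bbar : ℝ) (hbbar : bbar = (1 / (γ₁ - γ₂)) * Real.log (γ₂ ^ 2 / γ₁ ^ 2)) :
    0 < bbar ∧ deriv (deriv C) bbar = 0 ∧
      ∀ x > (0:ℝ), deriv (deriv C) x = 0 → x = bbar :=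
  stmt18_general c lam mu q γ₁ γ₂ hc hlam hprof hγ₂ hγ₁ hroot1 hroot2 W Z C hW hZ hC bbar hbbar
end
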